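/- Let t be a g-term, σ a substitution list, r a closed g-term, and p ∈ valid(t) such that tσ[p] is closed and t[p] ∈ duplicates(r) (with the algorithm's preconditions: tσ is closed and t occurs at a position of SCC(r) in r). Then globalize_step(r, σ, t)[p] = globalize(tσ[p]). -/

import Mathlib

namespace HashAlpha

/-- g-terms: λ-terms with de Bruijn indices, extended with global variables `gvar t`. -/
inductive GTerm : Type
  | var : ℕ → GTerm
  | app : GTerm → GTerm → GTerm
  | lam : GTerm → GTerm
  | gvar : GTerm → GTerm
  deriving DecidableEq

/-- A g-term is a pure λ-term if it contains no global variables. -/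
def GTerm.IsPure : GTerm → Prop
  | .var _ => True
  | .app a b => a.IsPure ∧ b.IsPure
  | .lam a => a.IsPure
  | .gvar _ => False

/-- Directions for term positions: ↓, ↙, ↘. -/
inductive Dir : Type
  | down | left | right
  deriving DecidableEq

/-- A term position is a word over {↓, ↙, ↘}. -/
abbrev Pos := List Dir

/-- `|p|_λ`: the number of ↓'s in a position. -/
def lamDepth (p : Pos) : ℕ := p.count Dir.down

/-- Term indexing `t[p]` (partial; does not descend into global variables). -/
def GTerm.index : GTerm → Pos → Option GTerm
  | t, [] => some t
  | .app a _, .left :: p => a.index p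
  | .app _ b, .right :: p => b.index p
  | .lam a, .down :: p => a.index p
  | _, _ => none

/-- `valid(t)`: the set of positions where `t[p]` is defined. -/
def Valid (t : GTerm) : Set Pos := {p | (t.index p).isSome}

/-- `vars(t)`: positions of variables. -/
def Vars (t : GTerm) : Set Pos := {p | ∃ i, t.index p = some (.var i)}

/-- `free(t)`: positions of free variables. -/
def Free (t : GTerm) : Set Pos :=
  {p | ∃ i, t.index p = some (.var i) ∧ lamDepth p ≤ i}

/-- A term is closed if it has no free variables. -/
def Closed (t : GTerm) : Prop := Free t = ∅

/-- `p` is locally closed in `t`: every free variable of `t[p]` is also free in `t`. -/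
def LocallyClosed (t : GTerm) (p : Pos) : Prop :=
  p ∈ Valid t ∧ ∀ u, t.index p = some u → ∀ q ∈ Free u, p ++ q ∈ Free t

/-- Subtract `d0` from every free variable (`d` is the current binder depth). -/
def declift (d0 : ℕ) : GTerm → ℕ → GTerm
  | .var j, d => if d ≤ j then .var (j - d0) else .var j
  | .app a b, d => .app (declift d0 a d) (declift d0 b d)
  | .lam a, d => .lam (declift d0 a (d + 1))
  | .gvar a, _ => .gvar a

/-- The lift `⟨t⟩p`: equal to `t[p]` except every free variable of `t[p]` is
decremented by `|p|_λ`. -/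
def liftAt (t : GTerm) (p : Pos) : Option GTerm :=
  (t.index p).map (fun u => declift (lamDepth p) u 0)

/-- Transition labels: ↓, ↙, ↘ and ↑. -/
inductive Lab : Type
  | down | left | right | up
  deriving DecidableEq

def Lab.ofDir : Dir → Lab
  | .down => .down
  | .left => .left
  | .right => .right

/-- Transitions between term nodes. -/
inductive Trans : GTerm × Pos → Lab → GTerm × Pos → Prop
  | dir (t : GTerm) (p : Pos) (x : Dir) :
      (p ++ [x]) ∈ Valid t → Trans (t, p) (Lab.ofDir x) (t, p ++ [x])
  | up (t : GTerm) (q r : Pos) :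
      t.index (q ++ Dir.down :: r) = some (.var (lamDepth r)) →
      Trans (t, q ++ Dir.down :: r) Lab.up (t, q)

/-- `R` is a bisimulation. -/
def IsBisim (R : GTerm × Pos → GTerm × Pos → Prop) : Prop :=
  ∀ n₁ n₂, R n₁ n₂ → ∀ x : Lab,
    (∀ n₁', Trans n₁ x n₁' → ∃ n₂', Trans n₂ x n₂' ∧ R n₁' n₂') ∧
    (∀ n₂', Trans n₂ x n₂' → ∃ n₁', Trans n₁ x n₁' ∧ R n₁' n₂')

/-- Two nodes are bisimilar when some bisimulation relates them. -/
def Bisim (n₁ n₂ : GTerm × Pos) : Prop := ∃ R, IsBisim R ∧ R n₁ n₂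

/-- `(t, p)` is a term node: `t` is closed and `p ∈ valid(t)`. -/
def IsNode (t : GTerm) (p : Pos) : Prop := Closed t ∧ p ∈ Valid t

/-- A single fork between term nodes (let-abs rule or closed rule). -/
def SingleFork (n₁ n₂ : GTerm × Pos) : Prop :=
  (∃ t p q₁ q₂ r u,
      n₁ = (t, p ++ q₁ ++ r) ∧ n₂ = (t, p ++ q₂ ++ r) ∧
      IsNode t (p ++ q₁ ++ r) ∧ IsNode t (p ++ q₂ ++ r) ∧
      t.index p = some u ∧ LocallyClosed u q₁ ∧ liftAt u q₁ = liftAt u q₂) ∨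
  (∃ t₁ t₂ p₁ p₂ r u,
      n₁ = (t₁, p₁ ++ r) ∧ n₂ = (t₂, p₂ ++ r) ∧
      IsNode t₁ (p₁ ++ r) ∧ IsNode t₂ (p₂ ++ r) ∧
      t₁.index p₁ = some u ∧ Closed u ∧ t₂.index p₂ = some u)

/-- Fork equivalence: the transitive closure of single forks. -/
def ForkEquiv : GTerm × Pos → GTerm × Pos → Prop := Relation.TransGen SingleFork

/-- Shift free variables ≥ `c` up by `d`. -/
def shiftAux (c d : ℕ) : GTerm → GTerm
  | .var j => if j < c then .var j else .var (j + d)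
  | .app a b => .app (shiftAux c d a) (shiftAux c d b)
  | .lam a => .lam (shiftAux (c + 1) d a)
  | .gvar a => .gvar a

/-- Capture-avoiding substitution of free variable `i` by `u` (at current depth `d`). -/
def substAux (i : ℕ) (u : GTerm) : ℕ → GTerm → GTerm
  | d, .var j => if j = i + d then shiftAux 0 d u else .var j
  | d, .app a b => .app (substAux i u d a) (substAux i u d b)
  | d, .lam a => .lam (substAux i u (d + 1) a)
  | _, .gvar a => .gvar a

/-- `t[i := u]`: capture-avoiding substitution of variable `i` by `u` in `t`. -/
def subst (i : ℕ) (u : GTerm) (t : GTerm) : GTerm := substAux i u 0 t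

/-- Simultaneous capture-avoiding substitution of variable `i` by `σᵢ`
(at current depth `d`). -/
def msubstAux (σ : List GTerm) : ℕ → GTerm → GTerm
  | d, .var j =>
      if j < d then .var j else shiftAux 0 d (σ.getD (j - d) (.var (j - d)))
  | d, .app a b => .app (msubstAux σ d a) (msubstAux σ d b)
  | d, .lam a => .lam (msubstAux σ (d + 1) a)
  | _, .gvar a => .gvar a

/-- `tσ`: simultaneous substitution of each variable `i` by the `i`-th element of `σ`. -/
def msubst (σ : List GTerm) (t : GTerm) : GTerm := msubstAux σ 0 t

/-- Term size (the term summary `|t|`); global variables count as leaves. -/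
def gsize : GTerm → ℕ
  | .var _ => 1
  | .gvar _ => 1
  | .app a b => gsize a + gsize b + 1
  | .lam a => gsize a + 1

theorem gsize_shiftAux (c d : ℕ) (t : GTerm) : gsize (shiftAux c d t) = gsize t := by
  induction t generalizing c with
  | var j => simp only [shiftAux]; split <;> rfl
  | app a b iha ihb => simp [shiftAux, gsize, iha, ihb]
  | lam a ih => simp [shiftAux, gsize, ih]
  | gvar a => rfl

theorem gsize_substAux_gvar (i : ℕ) (w : GTerm) (d : ℕ) (t : GTerm) :
    gsize (substAux i (.gvar w) d t) = gsize t := by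
  induction t generalizing d with
  | var j => simp only [substAux]; split <;> rfl
  | app a b iha ihb => simp [substAux, gsize, iha, ihb]
  | lam a ih => simp [substAux, gsize, ih]
  | gvar a => rfl

theorem gsize_msubstAux (σ : List GTerm) (h : ∀ u ∈ σ, ∃ w, u = .gvar w)
    (d : ℕ) (t : GTerm) : gsize (msubstAux σ d t) = gsize t := by
  induction t generalizing d with
  | var j =>
    simp only [msubstAux]
    split
    · rfl
    · rw [gsize_shiftAux]
      rcases Nat.lt_or_ge (j - d) σ.length with hl | hl
      · rw [List.getD_eq_getElem _ _ hl]
        obtain ⟨w, hw⟩ := h _ (List.getElem_mem hl)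
        rw [hw]; rfl
      · rw [List.getD_eq_default _ _ hl]; rfl
  | app a b iha ihb => simp [msubstAux, gsize, iha, ihb]
  | lam a ih => simp [msubstAux, gsize, ih]
  | gvar a => rfl

theorem gsize_msubst (σ : List GTerm) (h : ∀ u ∈ σ, ∃ w, u = .gvar w)
    (t : GTerm) : gsize (msubst σ t) = gsize t :=
  gsize_msubstAux σ h 0 t

/-- The naive globalization procedure. -/
def globalizeNaive : GTerm → GTerm
  | .lam t => .lam (globalizeNaive (subst 0 (.gvar (.lam t)) t))
  | .app t u => .app (globalizeNaive t) (globalizeNaive u)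
  | .gvar t => .gvar t
  | .var i => .var i
termination_by t => gsize t
decreasing_by
  · simp only [subst, gsize_substAux_gvar, gsize]; omega
  · simp only [gsize]; omega
  · simp only [gsize]; omega

/-- The strongly connected component of a closed g-term: positions all of whose
nonempty prefixes index open terms. -/
def SCC (t : GTerm) : Set Pos :=
  {p | p ∈ Valid t ∧ ∀ p' u, p' ≠ [] → p' <+: p → t.index p' = some u → ¬ Closed u}

/-- `duplicates(t)`: strict subterms in the SCC of `t` whose term summary (size)
is not unique within the SCC. -/
def duplicates (t : GTerm) : Set GTerm :=
  {u | ∃ p q v, p ∈ SCC t ∧ q ∈ SCC t ∧ p ≠ [] ∧ q ≠ [] ∧ p ≠ q ∧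
      t.index p = some u ∧ t.index q = some v ∧ gsize u = gsize v}

open Classical in
mutual
/-- Efficient globalization. -/
noncomputable def globalize (r : GTerm) : GTerm :=
  globalizeScc r [] (by simp) r
termination_by (gsize r, 2)
decreasing_by
  apply Prod.Lex.right; omega

noncomputable def globalizeScc (r : GTerm) (σ : List GTerm)
    (h : ∀ u ∈ σ, ∃ w, u = GTerm.gvar w) : GTerm → GTerm
  | .lam t => .lam (globalizeStep r (.gvar (.app r t) :: σ)
      (by
        intro u hu
        rcases List.mem_cons.mp hu with h' | h'
        · exact ⟨_, h'⟩
        · exact h u h') t)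
  | .app t u => .app (globalizeStep r σ h t) (globalizeStep r σ h u)
  | .gvar t => .gvar t
  | .var i => msubst σ (.var i)
termination_by t => (gsize t, 1)
decreasing_by
  · apply Prod.Lex.left; simp only [gsize]; omega
  · apply Prod.Lex.left; simp only [gsize]; omega
  · apply Prod.Lex.left; simp only [gsize]; omega

noncomputable def globalizeStep (r : GTerm) (σ : List GTerm)
    (h : ∀ u ∈ σ, ∃ w, u = GTerm.gvar w) (t : GTerm) : GTerm :=
  if Closed t ∨ t ∈ duplicates r then globalize (msubst σ t)
  else globalizeScc r σ h t
termination_by (gsize t, 3)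
decreasing_by
  · rw [gsize_msubst σ h]; apply Prod.Lex.right; omega
  · apply Prod.Lex.right; omega
end

/-! Induction on the position `p`. Along `p`, `globalizeStep` keeps descending through
subterms that are neither closed nor duplicates, extending `σ` by a global variable at each
binder; at the first prefix whose subterm is closed or a duplicate it switches to `globalize`
of the substituted subterm, and `globalize` in turn descends until it meets a closed subterm.
Since `t[p]` is itself closed or a duplicate, the descent stops at `p` at the latest. The
substitutions accumulated on the way only act on variables bound above `p`, which do not occur
in the closed term `tσ[p]`, so the term globalized at `p` is exactly `tσ[p]`. -/

def ClosedAt (d : ℕ) : GTerm → Prop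
  | .var j => j < d
  | .app a b => ClosedAt d a ∧ ClosedAt d b
  | .lam a => ClosedAt (d + 1) a
  | .gvar _ => True

@[simp]
lemma index_nil (t : GTerm) : t.index [] = some t := by cases t <;> rfl

@[simp]
lemma lamDepth_nil : lamDepth [] = 0 := rfl

@[simp]
lemma lamDepth_cons (x : Dir) (q : Pos) :
    lamDepth (x :: q) = lamDepth q + if x = .down then 1 else 0 := by
  cases x <;> simp [lamDepth]

lemma closedAt_of_forall_index_var {t : GTerm} {d : ℕ}
    (h : ∀ p i, t.index p = some (.var i) → i < d + lamDepth p) : ClosedAt d t := by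
  induction t generalizing d with
  | var j => simpa [ClosedAt] using h [] j
  | app a b iha ihb =>
    exact ⟨iha fun q i hq => by simpa using h (.left :: q) i hq,
      ihb fun q i hq => by simpa using h (.right :: q) i hq⟩
  | lam a iha =>
    refine iha fun q i hq => ?_
    have := h (.down :: q) i hq
    simp only [lamDepth_cons, if_true] at this
    omega
  | gvar a => trivial

lemma Closed.closedAt {t : GTerm} (ht : Closed t) (d : ℕ) : ClosedAt d t :=
  closedAt_of_forall_index_var fun p i hp => by
    by_contra hi
    exact (Set.eq_empty_iff_forall_notMem.mp ht) p ⟨i, hp, by omega⟩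

section Substitution

variable (σ : List GTerm)

lemma msubstAux_nil (d : ℕ) (t : GTerm) : msubstAux [] d t = t := by
  induction t generalizing d with
  | var j =>
    simp only [msubstAux, List.getD_nil, shiftAux]
    split_ifs <;> first | rfl | (congr 1; omega)
  | app a b iha ihb => simp [msubstAux, iha, ihb]
  | lam a iha => simp [msubstAux, iha]
  | gvar a => rfl

variable {σ} (hσ : ∀ v ∈ σ, ∃ w, v = GTerm.gvar w)
include hσ

lemma msubstAux_var_eq_var_or_gvar (d j : ℕ) :
    (∃ k, msubstAux σ d (.var j) = .var k) ∨ (∃ w, msubstAux σ d (.var j) = .gvar w) := by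
  simp only [msubstAux]
  split
  · exact .inl ⟨j, rfl⟩
  rcases Nat.lt_or_ge (j - d) σ.length with hl | hl
  · obtain ⟨w, hw⟩ := hσ _ (List.getElem_mem hl)
    rw [List.getD_eq_getElem _ _ hl, hw]
    exact .inr ⟨w, rfl⟩
  · rw [List.getD_eq_default _ _ hl]
    exact .inl ⟨_, rfl⟩

lemma index_msubstAux (t : GTerm) (p : Pos) (d : ℕ) :
    (msubstAux σ d t).index p = (t.index p).map (msubstAux σ (d + lamDepth p)) := by
  induction t generalizing p d with
  | var j =>
    rcases p with _ | ⟨x, q⟩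
    · simp
    rcases msubstAux_var_eq_var_or_gvar hσ d j with ⟨k, hk⟩ | ⟨w, hk⟩ <;>
      rw [hk] <;> cases x <;> rfl
  | app a b iha ihb =>
    rcases p with _ | ⟨_ | _ | _, q⟩
    · simp
    · rfl
    · simpa [msubstAux, GTerm.index] using iha q d
    · simpa [msubstAux, GTerm.index] using ihb q d
  | lam a iha =>
    rcases p with _ | ⟨_ | _ | _, q⟩
    · simp
    · simp only [msubstAux, GTerm.index, iha q (d + 1), lamDepth_cons, if_true]
      congr 2
      omega
    · rfl
    · rfl
  | gvar a =>
    rcases p with _ | ⟨_ | _ | _, q⟩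
    · simp
    all_goals rfl

/-- The two sides can only differ at the index `e`, which `h` excludes; elsewhere they agree
because global variables are invariant under shifting. -/
lemma msubstAux_cons (x : GTerm) (v : GTerm) (e : ℕ)
    (h : ClosedAt e (msubstAux σ (e + 1) v)) :
    msubstAux (x :: σ) e v = msubstAux σ (e + 1) v := by
  induction v generalizing e with
  | var j =>
    rcases Nat.lt_trichotomy j e with hj | rfl | hj
    · simp [msubstAux, hj, Nat.lt_succ_of_lt hj]
    · simp [msubstAux, ClosedAt] at h
    · have hje : j - e = j - (e + 1) + 1 := by omega
      simp only [msubstAux, show ¬ j < e by omega, show ¬ j < e + 1 by omega, if_false, hje,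
        List.getD_cons_succ]
      rcases Nat.lt_or_ge (j - (e + 1)) σ.length with hl | hl
      · obtain ⟨w, hw⟩ := hσ _ (List.getElem_mem hl)
        simp only [List.getD_eq_getElem _ _ hl, hw, shiftAux]
      · simp only [List.getD_eq_default _ _ hl, shiftAux, Nat.not_lt_zero, if_false]
        congr 1
        omega
  | app a b iha ihb => simp only [msubstAux, ClosedAt] at h ⊢; rw [iha e h.1, ihb e h.2]
  | lam a iha => simp only [msubstAux, ClosedAt] at h ⊢; rw [iha (e + 1) h]
  | gvar a => rfl

lemma index_msubst_cons_of_closed (x : GTerm) (hx : ∃ w, x = .gvar w) {a : GTerm} {q : Pos}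
    {u v : GTerm} (hu : (msubstAux σ 1 a).index q = some u) (huc : Closed u)
    (hv : a.index q = some v) : (msubst (x :: σ) a).index q = some u := by
  have hσx : ∀ y ∈ x :: σ, ∃ w, y = GTerm.gvar w := by
    rintro y (_ | ⟨_, hy⟩)
    exacts [hx, hσ y hy]
  rw [index_msubstAux hσ, hv, Option.map_some, Option.some_inj, Nat.add_comm] at hu
  rw [msubst, index_msubstAux hσx, hv, Option.map_some, Nat.zero_add,
    msubstAux_cons hσ x v _ (hu ▸ huc.closedAt _), hu]

end Substitution

def GlobalizeStepIndexAt (p : Pos) : Prop :=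
  ∀ (r t : GTerm) (σ : List GTerm) (hσ : ∀ v ∈ σ, ∃ w, v = GTerm.gvar w) (u v : GTerm),
    (msubst σ t).index p = some u → Closed u → t.index p = some v →
    (Closed v ∨ v ∈ duplicates r) → (globalizeStep r σ hσ t).index p = some (globalize u)

lemma index_globalizeScc_cons {q : Pos} (ih : GlobalizeStepIndexAt q) (r t : GTerm)
    (σ : List GTerm) (hσ : ∀ v ∈ σ, ∃ w, v = GTerm.gvar w) (x : Dir) {u v : GTerm}
    (hu : (msubst σ t).index (x :: q) = some u) (huc : Closed u)
    (hv : t.index (x :: q) = some v) (hvr : Closed v ∨ v ∈ duplicates r) :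
    (globalizeScc r σ hσ t).index (x :: q) = some (globalize u) := by
  match t, x with
  | .app a b, .left =>
    rw [globalizeScc]
    exact ih r a σ hσ u v hu huc hv hvr
  | .app a b, .right =>
    rw [globalizeScc]
    exact ih r b σ hσ u v hu huc hv hvr
  | .lam a, .down =>
    rw [globalizeScc]
    exact ih r a _ _ u v (index_msubst_cons_of_closed hσ _ ⟨_, rfl⟩ hu huc hv) huc hv hvr
  | .var _, _ | .gvar _, _ | .app _ _, .down | .lam _, .left | .lam _, .right =>
    simp [GTerm.index] at hv

lemma index_globalize_cons {q : Pos} (ih : GlobalizeStepIndexAt q) (r : GTerm) (x : Dir)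
    {u : GTerm} (hu : r.index (x :: q) = some u) (huc : Closed u) :
    (globalize r).index (x :: q) = some (globalize u) := by
  rw [globalize]
  exact index_globalizeScc_cons ih r r [] _ x (by rwa [msubst, msubstAux_nil]) huc hu (.inl huc)

theorem globalizeStepIndexAt (p : Pos) : GlobalizeStepIndexAt p := by
  induction p with
  | nil =>
    intro r t σ hσ u v hu _ hv hvr
    simp only [index_nil, Option.some_inj] at hu hv
    subst hu hv
    rw [globalizeStep, if_pos hvr, index_nil]
  | cons x q ih =>
    intro r t σ hσ u v hu huc hv hvr
    rw [globalizeStep]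
    split_ifs
    · exact index_globalize_cons ih _ x hu huc
    · exact index_globalizeScc_cons ih r t σ hσ x hu huc hv hvr

/-- indexing a duplicate subterm moves from `globalizeStep`
into `globalize`. -/
theorem globalizeStep_duplicate (t : GTerm) (σ : List GTerm)
    (hσ : ∀ v ∈ σ, ∃ w, v = GTerm.gvar w) (r : GTerm) (hr : Closed r)
    (p : Pos) (u : GTerm) (hu : (msubst σ t).index p = some u) (huc : Closed u)
    (v : GTerm) (hv : t.index p = some v) (hdup : v ∈ duplicates r)
    (htσ : Closed (msubst σ t)) (hocc : ∃ q ∈ SCC r, r.index q = some t) :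
    (globalizeStep r σ hσ t).index p = some (globalize u) :=
  globalizeStepIndexAt p r t σ hσ u v hu huc hv (.inr hdup)

end HashAlpha
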